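/- For any blocklength n and any (n,M)-code (f, φ₁, φ₂) for the Kaspi problem with memoryless source (Xⁿ,Yⁿ) i.i.d. ∼ P_{XY}, and any γ ≥ 0, the joint excess-distortion probability satisfies ε_nᴷ(D₁,D₂) ≥ Pr( Σ_{i=1}^n j_K(Xᵢ,Yᵢ|D₁,D₂,P_{XY}) ≥ log M + nγ ) − exp(−nγ). -/

import Mathlib

open scoped BigOperators Classical
open Finset

namespace Kaspi

/-- A probability mass function on a finite type. -/
def IsPMF {α : Type*} [Fintype α] (p : α → ℝ) : Prop :=
  (∀ a, 0 ≤ p a) ∧ ∑ a, p a = 1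

variable {X Y X1 X2 : Type*} [Fintype X] [Fintype Y] [Fintype X1] [Fintype X2]

/-- A joint probability mass function on `X × Y` (curried). -/
def IsPMF2 (P : X → Y → ℝ) : Prop :=
  (∀ x y, 0 ≤ P x y) ∧ ∑ x, ∑ y, P x y = 1

/-- A test channel `P_{X̂₁|XY}`. -/
def IsChan1 (W : X → Y → X1 → ℝ) : Prop := ∀ x y, IsPMF (W x y)

/-- A test channel `P_{X̂₂|XYX̂₁}`. -/
def IsChan2 (W : X → Y → X1 → X2 → ℝ) : Prop := ∀ x y a, IsPMF (W x y a)

/-- Induced reproduction marginal `P_{X̂₁}`. -/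
noncomputable def pA (P : X → Y → ℝ) (W1 : X → Y → X1 → ℝ) (a : X1) : ℝ :=
  ∑ x, ∑ y, P x y * W1 x y a

/-- Induced joint marginal `P_{Y X̂₁}`. -/
noncomputable def pYA (P : X → Y → ℝ) (W1 : X → Y → X1 → ℝ) (y : Y) (a : X1) : ℝ :=
  ∑ x, P x y * W1 x y a

/-- Induced conditional `P_{X̂₂|Y X̂₁}`. -/
noncomputable def pBgYA (P : X → Y → ℝ) (W1 : X → Y → X1 → ℝ) (W2 : X → Y → X1 → X2 → ℝ)
    (y : Y) (a : X1) (b : X2) : ℝ :=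
  (∑ x, P x y * W1 x y a * W2 x y a b) / pYA P W1 y a

/-- Mutual information `I(X,Y; X̂₁)`. -/
noncomputable def I1 (P : X → Y → ℝ) (W1 : X → Y → X1 → ℝ) : ℝ :=
  ∑ x, ∑ y, ∑ a, P x y * W1 x y a * Real.log (W1 x y a / pA P W1 a)

/-- Conditional mutual information `I(X; X̂₂ | Y, X̂₁)`. -/
noncomputable def I2 (P : X → Y → ℝ) (W1 : X → Y → X1 → ℝ) (W2 : X → Y → X1 → X2 → ℝ) : ℝ :=
  ∑ x, ∑ y, ∑ a, ∑ b,
    P x y * W1 x y a * W2 x y a b * Real.log (W2 x y a b / pBgYA P W1 W2 y a b)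

/-- Expected first distortion. -/
noncomputable def Ed1 (P : X → Y → ℝ) (W1 : X → Y → X1 → ℝ) (d1 : X → X1 → ℝ) : ℝ :=
  ∑ x, ∑ y, ∑ a, P x y * W1 x y a * d1 x a

/-- Expected second distortion. -/
noncomputable def Ed2 (P : X → Y → ℝ) (W1 : X → Y → X1 → ℝ) (W2 : X → Y → X1 → X2 → ℝ)
    (d2 : X → X2 → ℝ) : ℝ :=
  ∑ x, ∑ y, ∑ a, ∑ b, P x y * W1 x y a * W2 x y a b * d2 x b

/-- The Kaspi rate-distortion function `R_K(P_{XY}, D₁, D₂)`. -/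
noncomputable def RK (P : X → Y → ℝ) (d1 : X → X1 → ℝ) (d2 : X → X2 → ℝ) (D1 D2 : ℝ) : ℝ :=
  sInf { r | ∃ (W1 : X → Y → X1 → ℝ) (W2 : X → Y → X1 → X2 → ℝ),
    IsChan1 W1 ∧ IsChan2 W2 ∧ Ed1 P W1 d1 ≤ D1 ∧ Ed2 P W1 W2 d2 ≤ D2 ∧
    r = I1 P W1 + I2 P W1 W2 }

/-- `(W1, W2)` is a feasible pair achieving `R_K(P, D₁, D₂)`. -/
def Achieves (P : X → Y → ℝ) (d1 : X → X1 → ℝ) (d2 : X → X2 → ℝ) (D1 D2 : ℝ)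
    (W1 : X → Y → X1 → ℝ) (W2 : X → Y → X1 → X2 → ℝ) : Prop :=
  IsChan1 W1 ∧ IsChan2 W2 ∧ Ed1 P W1 d1 ≤ D1 ∧ Ed2 P W1 W2 d2 ≤ D2 ∧
    I1 P W1 + I2 P W1 W2 = RK P d1 d2 D1 D2

/-- `(λ₁, λ₂)` are dual-optimal multipliers for `R_K(P, D₁, D₂)`. -/
def DualOpt (P : X → Y → ℝ) (d1 : X → X1 → ℝ) (d2 : X → X2 → ℝ) (D1 D2 l1 l2 : ℝ) : Prop :=
  0 ≤ l1 ∧ 0 ≤ l2 ∧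
  RK P d1 d2 D1 D2 = sInf { r | ∃ (W1 : X → Y → X1 → ℝ) (W2 : X → Y → X1 → X2 → ℝ),
    IsChan1 W1 ∧ IsChan2 W2 ∧
    r = I1 P W1 + I2 P W1 W2 + l1 * (Ed1 P W1 d1 - D1) + l2 * (Ed2 P W1 W2 d2 - D2) }

/-- `α₂(x,y,x̂₁ | Q_{X̂₂|YX̂₁})`. -/
noncomputable def alpha2 (d2 : X → X2 → ℝ) (l2 : ℝ) (Q2 : Y → X1 → X2 → ℝ)
    (x : X) (y : Y) (a : X1) : ℝ :=
  (∑ b, Q2 y a b * Real.exp (-(l2 * d2 x b)))⁻¹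

/-- `α(x,y | Q_{X̂₁}, Q_{X̂₂|YX̂₁})`. -/
noncomputable def alpha (d1 : X → X1 → ℝ) (d2 : X → X2 → ℝ) (l1 l2 : ℝ)
    (Q1 : X1 → ℝ) (Q2 : Y → X1 → X2 → ℝ) (x : X) (y : Y) : ℝ :=
  (∑ a, Q1 a * Real.exp (-(l1 * d1 x a)) / alpha2 d2 l2 Q2 x y a)⁻¹

/-- The `(D₁,D₂)`-tilted information density for the Kaspi problem, built from
the marginals `Q1 = P*_{X̂₁}`, `Q2 = P*_{X̂₂|YX̂₁}` of an optimal test-channel pair. -/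
noncomputable def jK (d1 : X → X1 → ℝ) (d2 : X → X2 → ℝ) (l1 l2 D1 D2 : ℝ)
    (Q1 : X1 → ℝ) (Q2 : Y → X1 → X2 → ℝ) (x : X) (y : Y) : ℝ :=
  Real.log (alpha d1 d2 l1 l2 Q1 Q2 x y) - l1 * D1 - l2 * D2

end Kaspi

/-!
Dual optimality makes the optimal pair `(W1, W2)` minimise the Lagrangian
`I(X,Y;X̂₁) + I(X;X̂₂|Y,X̂₁) + λ₁ E d₁ + λ₂ E d₂` over all pairs of test channels. Write
`S_R(x,y) = Σ_{a,b} R₁(a) R₂(b|y,a) exp(-λ₁ d₁(x,a) - λ₂ d₂(x,b))` for sub-probability laws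
`R = (R₁, R₂)`, so that `α = 1 / S_Q` for the optimal output laws `Q = (P*_{X̂₁}, P*_{X̂₂|YX̂₁})`.
The Gibbs inequality bounds the Lagrangian of `(W1, W2)` below by `-E[log S_Q]`, while the
channels tilted by `R` have Lagrangian at most `-E[log S_R]`. Hence `Q` maximises
`R ↦ E[log S_R]`, and moving `Q` towards a point mass at `(a, β(y))` and differentiating at `0`
gives the single-letter bound `E[α(X,Y) exp(-λ₁ d₁(X,a) - λ₂ d₂(X,β(Y)))] ≤ 1`.

On the event `Σ jK ≥ log M + nγ` without excess distortion, the source probability of `(xⁿ,yⁿ)`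
is at most `(M e^{nγ})⁻¹ ∏ᵢ P α e^{-λ₁ d₁} e^{-λ₂ d₂}` evaluated at the reproductions. Summed over
each message, the product factorises over letters once the dependence of the second decoder on
`yⁿ` is replaced by a letter-wise maximiser, so each message contributes at most `1` by the
single-letter bound, and the event has probability at most `e^{-nγ}`.
-/

namespace Kaspi

open Real

def IsSubPMF {α : Type*} [Fintype α] (p : α → ℝ) : Prop :=
  (∀ a, 0 ≤ p a) ∧ ∑ a, p a ≤ 1

theorem IsPMF.isSubPMF {α : Type*} [Fintype α] {p : α → ℝ} (hp : IsPMF p) : IsSubPMF p :=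
  ⟨hp.1, hp.2.le⟩

theorem IsPMF.exists_pos {α : Type*} [Fintype α] {p : α → ℝ} (hp : IsPMF p) : ∃ a, 0 < p a := by
  obtain ⟨a, -, ha⟩ := exists_lt_of_sum_lt (s := univ) (f := 0) (g := p) (by simp [hp.2])
  exact ⟨a, ha⟩

section FiniteSums

variable {ι : Type*} [Fintype ι]

theorem neg_log_sum_le_sum_mul_log_div {v q : ι → ℝ} (hv : IsPMF v) (hq : ∀ i, 0 ≤ q i)
    (hvq : ∀ i, 0 < v i → 0 < q i) : -log (∑ i, q i) ≤ ∑ i, v i * log (v i / q i) := by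
  obtain ⟨i₀, hi₀⟩ := hv.exists_pos
  set c := ∑ i, q i
  have hc : 0 < c := (hvq i₀ hi₀).trans_le (single_le_sum (fun i _ => hq i) (mem_univ i₀))
  -- `log u ≤ u - 1` at `u = q i / (v i * c)`, summed over `i`
  have hterm : ∀ i, v i - q i / c ≤ v i * log (v i / q i) + v i * log c := by
    intro i
    rcases (hv.1 i).eq_or_lt with h | h
    · simp only [← h, zero_sub, zero_mul, add_zero, neg_nonpos]
      exact div_nonneg (hq i) hc.le
    have hqi := hvq i h
    have hlog := log_le_sub_one_of_pos (show 0 < q i / (v i * c) by positivity)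
    rw [log_div hqi.ne' (by positivity), log_mul h.ne' hc.ne'] at hlog
    have hmul : v i * (q i / (v i * c)) = q i / c := by field_simp
    rw [log_div h.ne' hqi.ne']
    nlinarith [mul_le_mul_of_nonneg_left hlog h.le]
  have hsum := sum_le_sum fun i (_ : i ∈ univ) => hterm i
  rw [sum_sub_distrib, ← sum_div, div_self hc.ne', hv.2, sum_add_distrib, ← sum_mul, hv.2,
    one_mul] at hsum
  linarith

theorem sum_mul_log_div_nonneg {v q : ι → ℝ} (hv : IsPMF v) (hq : IsSubPMF q)
    (hvq : ∀ i, 0 < v i → 0 < q i) : 0 ≤ ∑ i, v i * log (v i / q i) := by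
  have := log_nonpos (sum_nonneg fun i _ => hq.1 i) hq.2
  linarith [neg_log_sum_le_sum_mul_log_div hv hq.1 hvq]

theorem sum_mul_log_div_eq_neg_log_sum {v q : ι → ℝ} (hq : ∀ i, 0 ≤ q i) (hc : 0 < ∑ i, q i)
    (hvq : ∀ i, v i = q i / ∑ j, q j) : ∑ i, v i * log (v i / q i) = -log (∑ i, q i) := by
  have hterm : ∀ i, v i * log (v i / q i) = v i * -log (∑ j, q j) := by
    intro i
    rcases (hq i).eq_or_lt with h | h
    · simp [hvq i, ← h]
    rw [hvq i, div_div_cancel_left' h.ne', log_inv]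
  rw [sum_congr rfl fun i _ => hterm i, ← sum_mul]
  simp_rw [hvq, ← sum_div, div_self hc.ne', one_mul]

theorem sum_mul_div_le_one_of_sum_mul_log_le {p s r : ι → ℝ}
    (hp : ∑ i, p i = 1) (hs : ∀ i, p i ≠ 0 → s i ≠ 0)
    (hmax : ∀ t ∈ Set.Ioc (0 : ℝ) 1,
      ∑ i, p i * log ((1 - t) * s i + t * r i) ≤ ∑ i, p i * log (s i)) :
    ∑ i, p i * r i / s i ≤ 1 := by
  set φ : ℝ → ℝ := fun t => ∑ i, p i * log ((1 - t) * s i + t * r i)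
  have hφ : HasDerivAt φ (∑ i, p i * ((r i - s i) / s i)) 0 := by
    refine HasDerivAt.fun_sum fun i _ => ?_
    by_cases hpi : p i = 0
    · simpa [hpi] using hasDerivAt_const (0 : ℝ) (0 : ℝ)
    have hlin : HasDerivAt (fun t => (1 - t) * s i + t * r i) (r i - s i) 0 := by
      have hfun : (fun t => (1 - t) * s i + t * r i) = fun t => s i + t * (r i - s i) := by
        funext t; ring
      rw [hfun]
      simpa using ((hasDerivAt_id (0 : ℝ)).mul_const (r i - s i)).const_add (s i)
    simpa using (hlin.log (by simpa using hs i hpi)).const_mul (p i)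
  have hloc : IsLocalMaxOn φ (Set.Icc 0 1) 0 := by
    refine Filter.eventually_of_mem self_mem_nhdsWithin fun t ht => ?_
    rcases ht.1.eq_or_lt with rfl | h
    · rfl
    · simpa [φ] using hmax t ⟨h, ht.2⟩
  have hseg : segment ℝ (0 : ℝ) (0 + 1) ⊆ Set.Icc 0 1 := by simp [segment_eq_Icc]
  have hnonpos := hloc.hasFDerivWithinAt_nonpos hφ.hasDerivWithinAt.hasFDerivWithinAt
    (mem_posTangentConeAt_of_segment_subset hseg)
  rw [ContinuousLinearMap.toSpanSingleton_apply_one] at hnonpos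
  have hsplit : ∀ i, p i * r i / s i = p i * ((r i - s i) / s i) + p i := by
    intro i
    by_cases hpi : p i = 0
    · simp [hpi]
    field_simp [hs i hpi]
    ring
  rw [sum_congr rfl fun i _ => hsplit i, sum_add_distrib, hp]
  linarith

end FiniteSums

section Marginals

variable {X Y X1 X2 : Type*} [Fintype X] [Fintype Y] [Fintype X1] [Fintype X2]

def IsSubChan2 (R2 : Y → X1 → X2 → ℝ) : Prop := ∀ y a, IsSubPMF (R2 y a)

variable {P : X → Y → ℝ} {W1 : X → Y → X1 → ℝ} {W2 : X → Y → X1 → X2 → ℝ}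

omit [Fintype Y] in
theorem mul_le_pYA (hP : ∀ x y, 0 ≤ P x y) (hW1 : IsChan1 W1) (x : X) (y : Y) (a : X1) :
    P x y * W1 x y a ≤ pYA P W1 y a :=
  single_le_sum (f := fun x => P x y * W1 x y a) (fun x _ => mul_nonneg (hP x y) ((hW1 x y).1 a))
    (mem_univ x)

theorem pYA_le_pA (hP : ∀ x y, 0 ≤ P x y) (hW1 : IsChan1 W1) (y : Y) (a : X1) :
    pYA P W1 y a ≤ pA P W1 a := by
  rw [pA, Finset.sum_comm]
  exact single_le_sum (f := fun y => ∑ x, P x y * W1 x y a)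
    (fun y _ => sum_nonneg fun x _ => mul_nonneg (hP x y) ((hW1 x y).1 a)) (mem_univ y)

theorem mul_le_pA (hP : ∀ x y, 0 ≤ P x y) (hW1 : IsChan1 W1) (x : X) (y : Y) (a : X1) :
    P x y * W1 x y a ≤ pA P W1 a :=
  (mul_le_pYA hP hW1 x y a).trans (pYA_le_pA hP hW1 y a)

theorem isPMF_pA (hP : IsPMF2 P) (hW1 : IsChan1 W1) : IsPMF (pA P W1) := by
  refine ⟨fun a => sum_nonneg fun x _ => sum_nonneg fun y _ =>
    mul_nonneg (hP.1 x y) ((hW1 x y).1 a), ?_⟩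
  simp only [pA]
  rw [Finset.sum_comm, ← hP.2]
  refine sum_congr rfl fun x _ => ?_
  rw [Finset.sum_comm]
  exact sum_congr rfl fun y _ => by rw [← mul_sum, (hW1 x y).2, mul_one]

omit [Fintype Y] in
theorem pBgYA_nonneg (hP : ∀ x y, 0 ≤ P x y) (hW1 : IsChan1 W1) (hW2 : IsChan2 W2)
    (y : Y) (a : X1) (b : X2) : 0 ≤ pBgYA P W1 W2 y a b :=
  div_nonneg (sum_nonneg fun x _ =>
      mul_nonneg (mul_nonneg (hP x y) ((hW1 x y).1 a)) ((hW2 x y a).1 b))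
    (sum_nonneg fun x _ => mul_nonneg (hP x y) ((hW1 x y).1 a))

omit [Fintype Y] in
theorem pBgYA_pos (hP : ∀ x y, 0 ≤ P x y) (hW1 : IsChan1 W1) (hW2 : IsChan2 W2) {x : X} {y : Y}
    {a : X1} {b : X2} (h : 0 < P x y * W1 x y a * W2 x y a b) : 0 < pBgYA P W1 W2 y a b := by
  refine div_pos (h.trans_le (single_le_sum (f := fun x => P x y * W1 x y a * W2 x y a b)
    (fun x _ => mul_nonneg (mul_nonneg (hP x y) ((hW1 x y).1 a)) ((hW2 x y a).1 b))
    (mem_univ x))) ((pos_of_mul_pos_left h ((hW2 x y a).1 b)).trans_le (mul_le_pYA hP hW1 x y a))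

omit [Fintype Y] [Fintype X2] in
theorem pBgYA_mul_pYA (hP : ∀ x y, 0 ≤ P x y) (hW1 : IsChan1 W1) (y : Y) (a : X1) (b : X2) :
    pBgYA P W1 W2 y a b * pYA P W1 y a = ∑ x, P x y * W1 x y a * W2 x y a b := by
  by_cases h : pYA P W1 y a = 0
  · have hx := (sum_eq_zero_iff_of_nonneg fun x _ => mul_nonneg (hP x y) ((hW1 x y).1 a)).1 h
    simp [h, fun x => hx x (mem_univ x)]
  · exact div_mul_cancel₀ _ h

omit [Fintype Y] [Fintype X1] in
theorem sum_pBgYA (hW2 : IsChan2 W2) {y : Y} {a : X1} (h : pYA P W1 y a ≠ 0) :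
    ∑ b, pBgYA P W1 W2 y a b = 1 := by
  simp only [pBgYA]
  rw [← sum_div, Finset.sum_comm, div_eq_one_iff_eq h]
  exact sum_congr rfl fun x _ => by rw [← mul_sum, (hW2 x y a).2, mul_one]

omit [Fintype Y] in
theorem isSubChan2_pBgYA (hP : ∀ x y, 0 ≤ P x y) (hW1 : IsChan1 W1) (hW2 : IsChan2 W2) :
    IsSubChan2 (pBgYA P W1 W2) := by
  refine fun y a => ⟨pBgYA_nonneg hP hW1 hW2 y a, ?_⟩
  by_cases h : pYA P W1 y a = 0
  · simp [pBgYA, h]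
  · exact (sum_pBgYA hW2 h).le

end Marginals

section Information

variable {X Y X1 X2 : Type*} [Fintype X] [Fintype Y] [Fintype X1] [Fintype X2]
  {P : X → Y → ℝ} {V1 : X → Y → X1 → ℝ} {V2 : X → Y → X1 → X2 → ℝ}

omit [Fintype X2] in
theorem I1_le_sum_mul_log_div (hP : IsPMF2 P) (hV1 : IsChan1 V1) {R1 : X1 → ℝ} (hR1 : IsSubPMF R1)
    (hdom : ∀ a, 0 < pA P V1 a → 0 < R1 a) :
    I1 P V1 ≤ ∑ x, ∑ y, ∑ a, P x y * V1 x y a * log (V1 x y a / R1 a) := by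
  have hterm : ∀ x y a, P x y * V1 x y a * log (V1 x y a / R1 a) -
      P x y * V1 x y a * log (V1 x y a / pA P V1 a) =
        P x y * V1 x y a * log (pA P V1 a / R1 a) := by
    intro x y a
    rcases (mul_nonneg (hP.1 x y) ((hV1 x y).1 a)).eq_or_lt with h | h
    · simp [← h]
    have hm := h.trans_le (mul_le_pA hP.1 hV1 x y a)
    have hV := pos_of_mul_pos_right h (hP.1 x y)
    rw [← mul_sub, log_div hV.ne' (hdom a hm).ne', log_div hV.ne' hm.ne',
      log_div hm.ne' (hdom a hm).ne']
    ring
  have hgolden : ∑ x, ∑ y, ∑ a, P x y * V1 x y a * log (V1 x y a / R1 a) - I1 P V1 =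
      ∑ a, pA P V1 a * log (pA P V1 a / R1 a) := by
    simp only [I1, ← sum_sub_distrib, hterm]
    rw [sum_congr rfl fun x _ => Finset.sum_comm, Finset.sum_comm]
    exact sum_congr rfl fun a _ => by simp only [← sum_mul]; rfl
  linarith [sum_mul_log_div_nonneg (isPMF_pA hP hV1) hR1 hdom]

theorem I2_le_sum_mul_log_div (hP : ∀ x y, 0 ≤ P x y) (hV1 : IsChan1 V1) (hV2 : IsChan2 V2)
    {R2 : Y → X1 → X2 → ℝ} (hR2 : IsSubChan2 R2)
    (hdom : ∀ y a b, 0 < pBgYA P V1 V2 y a b → 0 < R2 y a b) :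
    I2 P V1 V2 ≤
      ∑ x, ∑ y, ∑ a, ∑ b, P x y * V1 x y a * V2 x y a b * log (V2 x y a b / R2 y a b) := by
  have hterm : ∀ x y a b, P x y * V1 x y a * V2 x y a b * log (V2 x y a b / R2 y a b) -
      P x y * V1 x y a * V2 x y a b * log (V2 x y a b / pBgYA P V1 V2 y a b) =
      P x y * V1 x y a * V2 x y a b * log (pBgYA P V1 V2 y a b / R2 y a b) := by
    intro x y a b
    rcases (mul_nonneg (mul_nonneg (hP x y) ((hV1 x y).1 a)) ((hV2 x y a).1 b)).eq_or_lt
      with h | h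
    · simp [← h]
    have hm := pBgYA_pos hP hV1 hV2 h
    have hV := pos_of_mul_pos_right h (mul_nonneg (hP x y) ((hV1 x y).1 a))
    rw [← mul_sub, log_div hV.ne' (hdom y a b hm).ne', log_div hV.ne' hm.ne',
      log_div hm.ne' (hdom y a b hm).ne']
    ring
  have hgolden : ∑ x, ∑ y, ∑ a, ∑ b,
      P x y * V1 x y a * V2 x y a b * log (V2 x y a b / R2 y a b) - I2 P V1 V2 =
      ∑ y, ∑ a, pYA P V1 y a * ∑ b, pBgYA P V1 V2 y a b * log (pBgYA P V1 V2 y a b / R2 y a b) := by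
    simp only [I2, ← sum_sub_distrib, hterm]
    rw [Finset.sum_comm]
    refine sum_congr rfl fun y _ => ?_
    rw [Finset.sum_comm]
    refine sum_congr rfl fun a _ => ?_
    rw [Finset.sum_comm, mul_sum]
    refine sum_congr rfl fun b _ => ?_
    rw [← sum_mul, ← pBgYA_mul_pYA hP hV1]
    ring
  have hnonneg : 0 ≤ ∑ y, ∑ a,
      pYA P V1 y a * ∑ b, pBgYA P V1 V2 y a b * log (pBgYA P V1 V2 y a b / R2 y a b) := by
    refine sum_nonneg fun y _ => sum_nonneg fun a _ => ?_
    by_cases h : pYA P V1 y a = 0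
    · simp [h]
    exact mul_nonneg (sum_nonneg fun x _ => mul_nonneg (hP x y) ((hV1 x y).1 a))
      (sum_mul_log_div_nonneg ⟨pBgYA_nonneg hP hV1 hV2 y a, sum_pBgYA hV2 h⟩ (hR2 y a)
        (hdom y a))
  linarith

end Information

section Tilt

variable {X Y X1 X2 : Type*} [Fintype X] [Fintype Y] [Fintype X1] [Fintype X2]
  (d1 : X → X1 → ℝ) (d2 : X → X2 → ℝ) (l1 l2 : ℝ)

noncomputable def tiltNorm₂ (R2 : Y → X1 → X2 → ℝ) (x : X) (y : Y) (a : X1) : ℝ :=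
  ∑ b, R2 y a b * exp (-(l2 * d2 x b))

noncomputable def tiltNorm (R1 : X1 → ℝ) (R2 : Y → X1 → X2 → ℝ) (x : X) (y : Y) : ℝ :=
  ∑ a, R1 a * exp (-(l1 * d1 x a)) * tiltNorm₂ d2 l2 R2 x y a

noncomputable def tiltWeight (R1 : X1 → ℝ) (R2 : Y → X1 → X2 → ℝ) (x : X) (y : Y)
    (p : X1 × X2) : ℝ :=
  R1 p.1 * R2 y p.1 p.2 * (exp (-(l1 * d1 x p.1)) * exp (-(l2 * d2 x p.2)))

noncomputable def tilt1 (R1 : X1 → ℝ) (R2 : Y → X1 → X2 → ℝ) (x : X) (y : Y) (a : X1) : ℝ :=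
  R1 a * exp (-(l1 * d1 x a)) * tiltNorm₂ d2 l2 R2 x y a / tiltNorm d1 d2 l1 l2 R1 R2 x y

/-- Where `tiltNorm₂` vanishes, `tilt1` vanishes too; the fallback `W2` only makes `tilt2` a
channel. -/
noncomputable def tilt2 (R2 : Y → X1 → X2 → ℝ) (W2 : X → Y → X1 → X2 → ℝ) (x : X) (y : Y)
    (a : X1) (b : X2) : ℝ :=
  if tiltNorm₂ d2 l2 R2 x y a = 0 then W2 x y a b
  else R2 y a b * exp (-(l2 * d2 x b)) / tiltNorm₂ d2 l2 R2 x y a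

variable {d1 d2 l1 l2} {R1 : X1 → ℝ} {R2 : Y → X1 → X2 → ℝ}

omit [Fintype X] [Fintype Y] in
theorem sum_tiltWeight (x : X) (y : Y) :
    ∑ p, tiltWeight d1 d2 l1 l2 R1 R2 x y p = tiltNorm d1 d2 l1 l2 R1 R2 x y := by
  rw [Fintype.sum_prod_type]
  refine sum_congr rfl fun a _ => ?_
  rw [tiltNorm₂, mul_sum]
  exact sum_congr rfl fun b _ => by simp only [tiltWeight]; ring

omit [Fintype X] [Fintype Y] in
theorem alpha_eq_inv_tiltNorm (x : X) (y : Y) :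
    alpha d1 d2 l1 l2 R1 R2 x y = (tiltNorm d1 d2 l1 l2 R1 R2 x y)⁻¹ := by
  simp only [alpha, alpha2, tiltNorm, tiltNorm₂, div_inv_eq_mul]

omit [Fintype X] [Fintype Y] [Fintype X1] [Fintype X2] in
theorem tiltWeight_nonneg (hR1 : ∀ a, 0 ≤ R1 a) (hR2 : ∀ y a b, 0 ≤ R2 y a b) (x : X) (y : Y)
    (p : X1 × X2) : 0 ≤ tiltWeight d1 d2 l1 l2 R1 R2 x y p :=
  mul_nonneg (mul_nonneg (hR1 p.1) (hR2 y p.1 p.2)) (mul_nonneg (exp_pos _).le (exp_pos _).le)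

omit [Fintype X] [Fintype Y] [Fintype X1] in
theorem tiltNorm₂_nonneg (hR2 : ∀ y a b, 0 ≤ R2 y a b) (x : X) (y : Y) (a : X1) :
    0 ≤ tiltNorm₂ d2 l2 R2 x y a :=
  sum_nonneg fun b _ => mul_nonneg (hR2 y a b) (exp_pos _).le

omit [Fintype X] [Fintype Y] in
theorem tiltNorm_nonneg (hR1 : ∀ a, 0 ≤ R1 a) (hR2 : ∀ y a b, 0 ≤ R2 y a b) (x : X) (y : Y) :
    0 ≤ tiltNorm d1 d2 l1 l2 R1 R2 x y :=
  sum_nonneg fun a _ =>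
    mul_nonneg (mul_nonneg (hR1 a) (exp_pos _).le) (tiltNorm₂_nonneg hR2 x y a)

omit [Fintype X] [Fintype Y] in
theorem tiltNorm_le_one (hR1 : IsSubPMF R1) (hR2 : IsSubChan2 R2) (hl1 : 0 ≤ l1) (hl2 : 0 ≤ l2)
    (hd1 : ∀ x a, 0 ≤ d1 x a) (hd2 : ∀ x b, 0 ≤ d2 x b) (x : X) (y : Y) :
    tiltNorm d1 d2 l1 l2 R1 R2 x y ≤ 1 := by
  have hs : ∀ a, tiltNorm₂ d2 l2 R2 x y a ≤ 1 := fun a =>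
    (sum_le_sum fun b _ => mul_le_of_le_one_right ((hR2 y a).1 b)
      (exp_le_one_iff.2 (neg_nonpos.2 (mul_nonneg hl2 (hd2 x b))))).trans (hR2 y a).2
  refine (sum_le_sum fun a _ => ?_).trans hR1.2
  calc R1 a * exp (-(l1 * d1 x a)) * tiltNorm₂ d2 l2 R2 x y a ≤ R1 a * 1 * 1 := by
        refine mul_le_mul (mul_le_mul_of_nonneg_left ?_ (hR1.1 a)) (hs a)
          (tiltNorm₂_nonneg (fun y a => (hR2 y a).1) x y a) (by simpa using hR1.1 a)
        exact exp_le_one_iff.2 (neg_nonpos.2 (mul_nonneg hl1 (hd1 x a)))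
    _ = R1 a := by ring

theorem tiltNorm_pA_pBgYA_pos {P : X → Y → ℝ} {W1 : X → Y → X1 → ℝ}
    {W2 : X → Y → X1 → X2 → ℝ} (hP : IsPMF2 P) (hW1 : IsChan1 W1) (hW2 : IsChan2 W2) {x : X}
    {y : Y} (h : 0 < P x y) : 0 < tiltNorm d1 d2 l1 l2 (pA P W1) (pBgYA P W1 W2) x y := by
  obtain ⟨a, ha⟩ := (hW1 x y).exists_pos
  obtain ⟨b, hb⟩ := (hW2 x y a).exists_pos
  have hw : 0 < tiltWeight d1 d2 l1 l2 (pA P W1) (pBgYA P W1 W2) x y (a, b) := by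
    have := (mul_pos h ha).trans_le (mul_le_pA hP.1 hW1 x y a)
    have := pBgYA_pos hP.1 hW1 hW2 (mul_pos (mul_pos h ha) hb)
    simp only [tiltWeight]
    positivity
  rw [← sum_tiltWeight]
  exact hw.trans_le (single_le_sum (fun p _ => tiltWeight_nonneg (isPMF_pA hP hW1).1
    (pBgYA_nonneg hP.1 hW1 hW2) x y p) (mem_univ _))

omit [Fintype X] [Fintype Y] in
theorem alpha_nonneg (hR1 : ∀ a, 0 ≤ R1 a) (hR2 : ∀ y a b, 0 ≤ R2 y a b) (x : X) (y : Y) :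
    0 ≤ alpha d1 d2 l1 l2 R1 R2 x y := by
  rw [alpha_eq_inv_tiltNorm]
  exact inv_nonneg.2 (tiltNorm_nonneg hR1 hR2 x y)

theorem alpha_pA_pBgYA_pos {P : X → Y → ℝ} {W1 : X → Y → X1 → ℝ}
    {W2 : X → Y → X1 → X2 → ℝ} (hP : IsPMF2 P) (hW1 : IsChan1 W1) (hW2 : IsChan2 W2) {x : X}
    {y : Y} (h : 0 < P x y) : 0 < alpha d1 d2 l1 l2 (pA P W1) (pBgYA P W1 W2) x y := by
  rw [alpha_eq_inv_tiltNorm]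
  exact inv_pos.2 (tiltNorm_pA_pBgYA_pos hP hW1 hW2 h)

omit [Fintype X] [Fintype Y] in
theorem isChan1_tilt1 (hR1 : ∀ a, 0 ≤ R1 a) (hR2 : ∀ y a b, 0 ≤ R2 y a b)
    (hS : ∀ x y, 0 < tiltNorm d1 d2 l1 l2 R1 R2 x y) : IsChan1 (tilt1 d1 d2 l1 l2 R1 R2) :=
  fun x y => ⟨fun a => div_nonneg (mul_nonneg (mul_nonneg (hR1 a) (exp_pos _).le)
    (tiltNorm₂_nonneg hR2 x y a)) (hS x y).le, by
      simp only [tilt1]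
      rw [← sum_div]
      exact div_self (hS x y).ne'⟩

omit [Fintype X] [Fintype Y] [Fintype X1] in
theorem isChan2_tilt2 (hR2 : ∀ y a b, 0 ≤ R2 y a b) {W2 : X → Y → X1 → X2 → ℝ}
    (hW2 : IsChan2 W2) : IsChan2 (tilt2 d2 l2 R2 W2) := by
  intro x y a
  by_cases h : tiltNorm₂ d2 l2 R2 x y a = 0
  · convert hW2 x y a using 1
    exact funext fun b => if_pos h
  refine ⟨fun b => ?_, ?_⟩
  · simp only [tilt2, h, if_false]
    exact div_nonneg (mul_nonneg (hR2 y a b) (exp_pos _).le) (tiltNorm₂_nonneg hR2 x y a)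
  · simp only [tilt2, h, if_false]
    rw [← sum_div]
    exact div_self h

omit [Fintype X] [Fintype Y] in
theorem tilt1_mul_tilt2 (hR2 : ∀ y a b, 0 ≤ R2 y a b) (W2 : X → Y → X1 → X2 → ℝ) (x : X)
    (y : Y) (a : X1) (b : X2) :
    tilt1 d1 d2 l1 l2 R1 R2 x y a * tilt2 d2 l2 R2 W2 x y a b =
      tiltWeight d1 d2 l1 l2 R1 R2 x y (a, b) / tiltNorm d1 d2 l1 l2 R1 R2 x y := by
  by_cases h : tiltNorm₂ d2 l2 R2 x y a = 0
  · have hb := (sum_eq_zero_iff_of_nonneg fun b _ =>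
      mul_nonneg (hR2 y a b) (exp_pos _).le).1 h b (mem_univ b)
    have hR : R2 y a b = 0 := by simpa [(exp_pos _).ne'] using hb
    simp [tilt1, tiltWeight, h, hR]
  · simp only [tilt1, tilt2, tiltWeight, h, if_false]
    field_simp

end Tilt

section Lagrangian

variable {X Y X1 X2 : Type*} [Fintype X] [Fintype Y] [Fintype X1] [Fintype X2]

noncomputable def lagrangian (P : X → Y → ℝ) (V1 : X → Y → X1 → ℝ) (V2 : X → Y → X1 → X2 → ℝ)
    (d1 : X → X1 → ℝ) (d2 : X → X2 → ℝ) (l1 l2 : ℝ) : ℝ :=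
  I1 P V1 + I2 P V1 V2 + l1 * Ed1 P V1 d1 + l2 * Ed2 P V1 V2 d2

/-- The Lagrangian with the output laws `pA P V1`, `pBgYA P V1 V2` replaced by `R1`, `R2`. -/
noncomputable def crossLag (P : X → Y → ℝ) (V1 : X → Y → X1 → ℝ) (V2 : X → Y → X1 → X2 → ℝ)
    (R1 : X1 → ℝ) (R2 : Y → X1 → X2 → ℝ) (d1 : X → X1 → ℝ) (d2 : X → X2 → ℝ) (l1 l2 : ℝ) : ℝ :=
  (∑ x, ∑ y, ∑ a, P x y * V1 x y a * log (V1 x y a / R1 a)) +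
    (∑ x, ∑ y, ∑ a, ∑ b, P x y * V1 x y a * V2 x y a b * log (V2 x y a b / R2 y a b)) +
    l1 * Ed1 P V1 d1 + l2 * Ed2 P V1 V2 d2

def OutputsDominatedBy (P : X → Y → ℝ) (V1 : X → Y → X1 → ℝ) (V2 : X → Y → X1 → X2 → ℝ)
    (R1 : X1 → ℝ) (R2 : Y → X1 → X2 → ℝ) : Prop :=
  (∀ a, 0 < pA P V1 a → 0 < R1 a) ∧ ∀ y a b, 0 < pBgYA P V1 V2 y a b → 0 < R2 y a b

variable {P : X → Y → ℝ} {V1 : X → Y → X1 → ℝ} {V2 : X → Y → X1 → X2 → ℝ}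
  {R1 : X1 → ℝ} {R2 : Y → X1 → X2 → ℝ} {d1 : X → X1 → ℝ} {d2 : X → X2 → ℝ} {l1 l2 : ℝ}

theorem lagrangian_le_crossLag (hP : IsPMF2 P) (hV1 : IsChan1 V1) (hV2 : IsChan2 V2)
    (hR1 : IsSubPMF R1) (hR2 : IsSubChan2 R2) (hdom : OutputsDominatedBy P V1 V2 R1 R2) :
    lagrangian P V1 V2 d1 d2 l1 l2 ≤ crossLag P V1 V2 R1 R2 d1 d2 l1 l2 := by
  simp only [lagrangian, crossLag]
  linarith [I1_le_sum_mul_log_div hP hV1 hR1 hdom.1, I2_le_sum_mul_log_div hP.1 hV1 hV2 hR2 hdom.2]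

theorem OutputsDominatedBy.pos (hdom : OutputsDominatedBy P V1 V2 R1 R2)
    (hP : ∀ x y, 0 ≤ P x y) (hV1 : IsChan1 V1) (hV2 : IsChan2 V2) {x : X} {y : Y} {a : X1}
    {b : X2} (h : 0 < P x y * V1 x y a * V2 x y a b) : 0 < R1 a ∧ 0 < R2 y a b :=
  ⟨hdom.1 a ((pos_of_mul_pos_left h ((hV2 x y a).1 b)).trans_le (mul_le_pA hP hV1 x y a)),
    hdom.2 y a b (pBgYA_pos hP hV1 hV2 h)⟩

theorem crossLag_eq_sum_sum_joint (hP : ∀ x y, 0 ≤ P x y) (hV1 : IsChan1 V1)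
    (hV2 : IsChan2 V2) (hdom : OutputsDominatedBy P V1 V2 R1 R2) :
    crossLag P V1 V2 R1 R2 d1 d2 l1 l2 = ∑ x, ∑ y, P x y * ∑ p : X1 × X2,
      V1 x y p.1 * V2 x y p.1 p.2 *
        log (V1 x y p.1 * V2 x y p.1 p.2 / tiltWeight d1 d2 l1 l2 R1 R2 x y p) := by
  have hterm : ∀ x y a b,
      P x y * V1 x y a * V2 x y a b * log (V1 x y a / R1 a) +
        P x y * V1 x y a * V2 x y a b * log (V2 x y a b / R2 y a b) +
        l1 * (P x y * V1 x y a * V2 x y a b * d1 x a) +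
        l2 * (P x y * V1 x y a * V2 x y a b * d2 x b) =
      P x y * (V1 x y a * V2 x y a b *
        log (V1 x y a * V2 x y a b / tiltWeight d1 d2 l1 l2 R1 R2 x y (a, b))) := by
    intro x y a b
    by_cases h0 : P x y * V1 x y a * V2 x y a b = 0
    · rcases mul_eq_zero.1 h0 with h | h
      · rcases mul_eq_zero.1 h with h | h <;> simp [h]
      · simp [h]
    have h := (mul_nonneg (mul_nonneg (hP x y) ((hV1 x y).1 a)) ((hV2 x y a).1 b)).lt_of_ne' h0
    obtain ⟨hR1, hR2⟩ := hdom.pos hP hV1 hV2 h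
    have hV1a := pos_of_mul_pos_right (pos_of_mul_pos_left h ((hV2 x y a).1 b)) (hP x y)
    have hV2b := pos_of_mul_pos_right h (mul_nonneg (hP x y) ((hV1 x y).1 a))
    simp only [tiltWeight]
    rw [log_div hV1a.ne' hR1.ne', log_div hV2b.ne' hR2.ne', log_div (by positivity)
      (by positivity), log_mul hV1a.ne' hV2b.ne', log_mul (by positivity) (by positivity),
      log_mul hR1.ne' hR2.ne', log_mul (by positivity) (by positivity), log_exp, log_exp]
    ring
  have hmarg : ∀ x y a (F : ℝ), P x y * V1 x y a * F = ∑ b, P x y * V1 x y a * V2 x y a b * F :=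
    fun x y a F => by rw [← sum_mul, ← mul_sum, (hV2 x y a).2, mul_one]
  simp only [Fintype.sum_prod_type, mul_sum, crossLag, Ed1, Ed2]
  simp only [hmarg _ _ _ (log _), hmarg _ _ _ (d1 _ _), mul_sum, ← sum_add_distrib, hterm]

theorem neg_sum_log_tiltNorm_le_crossLag (hP : ∀ x y, 0 ≤ P x y) (hV1 : IsChan1 V1)
    (hV2 : IsChan2 V2) (hR1 : ∀ a, 0 ≤ R1 a) (hR2 : ∀ y a b, 0 ≤ R2 y a b)
    (hdom : OutputsDominatedBy P V1 V2 R1 R2) :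
    -∑ x, ∑ y, P x y * log (tiltNorm d1 d2 l1 l2 R1 R2 x y) ≤
      crossLag P V1 V2 R1 R2 d1 d2 l1 l2 := by
  rw [crossLag_eq_sum_sum_joint hP hV1 hV2 hdom, ← sum_neg_distrib]
  refine sum_le_sum fun x _ => ?_
  rw [← sum_neg_distrib]
  refine sum_le_sum fun y _ => ?_
  rcases (hP x y).eq_or_lt with h | h
  · simp [← h]
  have hv : IsPMF fun p : X1 × X2 => V1 x y p.1 * V2 x y p.1 p.2 := by
    refine ⟨fun p => mul_nonneg ((hV1 x y).1 _) ((hV2 x y _).1 _), ?_⟩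
    rw [Fintype.sum_prod_type, ← (hV1 x y).2]
    exact sum_congr rfl fun a _ => by simp only; rw [← mul_sum, (hV2 x y a).2, mul_one]
  rw [← sum_tiltWeight, ← mul_neg]
  refine mul_le_mul_of_nonneg_left (neg_log_sum_le_sum_mul_log_div hv
    (tiltWeight_nonneg hR1 hR2 x y) fun p hp => ?_) h.le
  obtain ⟨hR1p, hR2p⟩ := hdom.pos hP hV1 hV2 (by rw [mul_assoc]; exact mul_pos h hp)
  simp only [tiltWeight]
  positivity

theorem outputsDominatedBy_tilt (hR1 : ∀ a, 0 ≤ R1 a) (hR2 : ∀ y a b, 0 ≤ R2 y a b)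
    (W2 : X → Y → X1 → X2 → ℝ) :
    OutputsDominatedBy P (tilt1 d1 d2 l1 l2 R1 R2) (tilt2 d2 l2 R2 W2) R1 R2 := by
  refine ⟨fun a h => (hR1 a).lt_of_ne' fun h0 => h.ne' ?_,
    fun y a b h => (hR2 y a b).lt_of_ne' fun h0 => h.ne' ?_⟩
  · simp [pA, tilt1, h0]
  · simp [pBgYA, mul_assoc, tilt1_mul_tilt2 hR2, tiltWeight, h0]

theorem crossLag_tilt (hP : ∀ x y, 0 ≤ P x y) (hR1 : ∀ a, 0 ≤ R1 a)
    (hR2 : ∀ y a b, 0 ≤ R2 y a b) (hS : ∀ x y, 0 < tiltNorm d1 d2 l1 l2 R1 R2 x y)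
    {W2 : X → Y → X1 → X2 → ℝ} (hW2 : IsChan2 W2) :
    crossLag P (tilt1 d1 d2 l1 l2 R1 R2) (tilt2 d2 l2 R2 W2) R1 R2 d1 d2 l1 l2 =
      -∑ x, ∑ y, P x y * log (tiltNorm d1 d2 l1 l2 R1 R2 x y) := by
  rw [crossLag_eq_sum_sum_joint hP (isChan1_tilt1 hR1 hR2 hS) (isChan2_tilt2 hR2 hW2)
    (outputsDominatedBy_tilt hR1 hR2 W2), ← sum_neg_distrib]
  refine sum_congr rfl fun x _ => ?_
  rw [← sum_neg_distrib]
  refine sum_congr rfl fun y _ => ?_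
  rw [sum_mul_log_div_eq_neg_log_sum (tiltWeight_nonneg hR1 hR2 x y)
    (by rw [sum_tiltWeight]; exact hS x y) fun p => by rw [tilt1_mul_tilt2 hR2, sum_tiltWeight],
    sum_tiltWeight, mul_neg]

end Lagrangian

section Duality

variable {X Y X1 X2 : Type*} [Fintype X] [Fintype Y] [Fintype X1] [Fintype X2]
  {P : X → Y → ℝ} {W1 V1 : X → Y → X1 → ℝ} {W2 V2 : X → Y → X1 → X2 → ℝ}
  {d1 : X → X1 → ℝ} {d2 : X → X2 → ℝ} {l1 l2 D1 D2 : ℝ}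

theorem lagrangian_nonneg (hP : IsPMF2 P) (hd1 : ∀ x a, 0 ≤ d1 x a) (hd2 : ∀ x b, 0 ≤ d2 x b)
    (hl1 : 0 ≤ l1) (hl2 : 0 ≤ l2) (hV1 : IsChan1 V1) (hV2 : IsChan2 V2) :
    0 ≤ lagrangian P V1 V2 d1 d2 l1 l2 := by
  have hQ1 := (isPMF_pA hP hV1).isSubPMF
  have hQ2 := isSubChan2_pBgYA hP.1 hV1 hV2
  have hlog : ∑ x, ∑ y, P x y * log (tiltNorm d1 d2 l1 l2 (pA P V1) (pBgYA P V1 V2) x y) ≤ 0 :=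
    sum_nonpos fun x _ => sum_nonpos fun y _ => mul_nonpos_of_nonneg_of_nonpos (hP.1 x y)
      (log_nonpos (tiltNorm_nonneg hQ1.1 (fun y a => (hQ2 y a).1) x y)
        (tiltNorm_le_one hQ1 hQ2 hl1 hl2 hd1 hd2 x y))
  calc 0 ≤ -∑ x, ∑ y, P x y * log (tiltNorm d1 d2 l1 l2 (pA P V1) (pBgYA P V1 V2) x y) := by
        linarith
    _ ≤ crossLag P V1 V2 (pA P V1) (pBgYA P V1 V2) d1 d2 l1 l2 :=
      neg_sum_log_tiltNorm_le_crossLag hP.1 hV1 hV2 hQ1.1 (fun y a => (hQ2 y a).1)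
        ⟨fun _ => id, fun _ _ _ => id⟩
    _ = lagrangian P V1 V2 d1 d2 l1 l2 := rfl

theorem lagrangian_le_of_dualOpt (hP : IsPMF2 P) (hd1 : ∀ x a, 0 ≤ d1 x a)
    (hd2 : ∀ x b, 0 ≤ d2 x b) (hdual : DualOpt P d1 d2 D1 D2 l1 l2)
    (hach : Achieves P d1 d2 D1 D2 W1 W2) (hV1 : IsChan1 V1) (hV2 : IsChan2 V2) :
    lagrangian P W1 W2 d1 d2 l1 l2 ≤ lagrangian P V1 V2 d1 d2 l1 l2 := by
  obtain ⟨hl1, hl2, hRK⟩ := hdual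
  obtain ⟨-, -, hEd1, hEd2, hI⟩ := hach
  have hbdd : BddBelow {r | ∃ (U1 : X → Y → X1 → ℝ) (U2 : X → Y → X1 → X2 → ℝ),
      IsChan1 U1 ∧ IsChan2 U2 ∧ r = I1 P U1 + I2 P U1 U2 + l1 * (Ed1 P U1 d1 - D1) +
        l2 * (Ed2 P U1 U2 d2 - D2)} := by
    refine ⟨-(l1 * D1) - l2 * D2, ?_⟩
    rintro _ ⟨U1, U2, hU1, hU2, rfl⟩
    have := lagrangian_nonneg hP hd1 hd2 hl1 hl2 hU1 hU2
    simp only [lagrangian] at this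
    linarith
  have hV := hRK ▸ csInf_le hbdd ⟨V1, V2, hV1, hV2, rfl⟩
  simp only [lagrangian]
  -- `lagrangian W - l1 * D1 - l2 * D2 ≤ I1 + I2 = RK ≤ lagrangian V - l1 * D1 - l2 * D2`
  linarith [mul_le_mul_of_nonneg_left hEd1 hl1, mul_le_mul_of_nonneg_left hEd2 hl2]

theorem sum_log_tiltNorm_le_of_dualOpt (hP : IsPMF2 P) (hd1 : ∀ x a, 0 ≤ d1 x a)
    (hd2 : ∀ x b, 0 ≤ d2 x b) (hdual : DualOpt P d1 d2 D1 D2 l1 l2)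
    (hach : Achieves P d1 d2 D1 D2 W1 W2) {R1 : X1 → ℝ} {R2 : Y → X1 → X2 → ℝ}
    (hR1 : IsSubPMF R1) (hR2 : IsSubChan2 R2) (hS : ∀ x y, 0 < tiltNorm d1 d2 l1 l2 R1 R2 x y) :
    ∑ x, ∑ y, P x y * log (tiltNorm d1 d2 l1 l2 R1 R2 x y) ≤
      ∑ x, ∑ y, P x y * log (tiltNorm d1 d2 l1 l2 (pA P W1) (pBgYA P W1 W2) x y) := by
  have hW1 : IsChan1 W1 := hach.1
  have hW2 : IsChan2 W2 := hach.2.1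
  have hR2' : ∀ y a b, 0 ≤ R2 y a b := fun y a => (hR2 y a).1
  have := calc
    -∑ x, ∑ y, P x y * log (tiltNorm d1 d2 l1 l2 (pA P W1) (pBgYA P W1 W2) x y)
        ≤ crossLag P W1 W2 (pA P W1) (pBgYA P W1 W2) d1 d2 l1 l2 :=
      neg_sum_log_tiltNorm_le_crossLag hP.1 hW1 hW2 (isPMF_pA hP hW1).1
        (pBgYA_nonneg hP.1 hW1 hW2) ⟨fun _ => id, fun _ _ _ => id⟩
    _ = lagrangian P W1 W2 d1 d2 l1 l2 := rfl
    _ ≤ lagrangian P (tilt1 d1 d2 l1 l2 R1 R2) (tilt2 d2 l2 R2 W2) d1 d2 l1 l2 :=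
      lagrangian_le_of_dualOpt hP hd1 hd2 hdual hach (isChan1_tilt1 hR1.1 hR2' hS)
        (isChan2_tilt2 hR2' hW2)
    _ ≤ crossLag P (tilt1 d1 d2 l1 l2 R1 R2) (tilt2 d2 l2 R2 W2) R1 R2 d1 d2 l1 l2 :=
      lagrangian_le_crossLag hP (isChan1_tilt1 hR1.1 hR2' hS) (isChan2_tilt2 hR2' hW2) hR1 hR2
        (outputsDominatedBy_tilt hR1.1 hR2' W2)
    _ = -∑ x, ∑ y, P x y * log (tiltNorm d1 d2 l1 l2 R1 R2 x y) :=
      crossLag_tilt hP.1 hR1.1 hR2' hS hW2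
  linarith

end Duality

section Mixture

variable {X Y X1 X2 : Type*} [Fintype X1] [Fintype X2] {d1 : X → X1 → ℝ} {d2 : X → X2 → ℝ}
  {l1 l2 : ℝ}

theorem exists_tiltNorm_eq_mix {Q1 : X1 → ℝ} {Q2 : Y → X1 → X2 → ℝ} (hQ1 : IsPMF Q1)
    (hQ2 : IsSubChan2 Q2) (a₀ : X1) (β : Y → X2) {t : ℝ} (ht : t ∈ Set.Ioc 0 1) :
    ∃ R1 R2, IsSubPMF R1 ∧ IsSubChan2 R2 ∧ ∀ x y, tiltNorm d1 d2 l1 l2 R1 R2 x y =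
      (1 - t) * tiltNorm d1 d2 l1 l2 Q1 Q2 x y +
        t * (exp (-(l1 * d1 x a₀)) * exp (-(l2 * d2 x (β y)))) := by
  obtain ⟨ht0, ht1⟩ := ht
  set R1 : X1 → ℝ := fun a => (1 - t) * Q1 a + t * if a = a₀ then 1 else 0
  -- the mixture of the joint laws `Q1 a * Q2 y a b` and `δ a₀ a * δ (β y) b`
  set J : Y → X1 → X2 → ℝ := fun y a b =>
    (1 - t) * (Q1 a * Q2 y a b) + t * ((if a = a₀ then 1 else 0) * if b = β y then 1 else 0)
  have hR1 : ∀ a, 0 ≤ R1 a := fun a => add_nonneg (mul_nonneg (sub_nonneg.2 ht1) (hQ1.1 a))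
    (mul_nonneg ht0.le (by split_ifs <;> norm_num))
  have hJ : ∀ y a b, 0 ≤ J y a b := fun y a b =>
    add_nonneg (mul_nonneg (sub_nonneg.2 ht1) (mul_nonneg (hQ1.1 a) ((hQ2 y a).1 b)))
      (mul_nonneg ht0.le (by split_ifs <;> norm_num))
  have hJR : ∀ y a, ∑ b, J y a b ≤ R1 a := fun y a => by
    simp only [J, R1, sum_add_distrib, ← mul_sum, sum_ite_eq', mem_univ, if_true, mul_one]
    nlinarith [mul_le_mul_of_nonneg_left (hQ2 y a).2 (mul_nonneg (by linarith : (0:ℝ) ≤ 1 - t)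
      (hQ1.1 a))]
  have hfac : ∀ y a b, R1 a * (J y a b / R1 a) = J y a b := fun y a b => by
    by_cases h : R1 a = 0
    · have := (single_le_sum (fun b _ => hJ y a b) (mem_univ b)).trans (hJR y a)
      rw [h] at this ⊢
      linarith [hJ y a b]
    · exact mul_div_cancel₀ _ h
  refine ⟨R1, fun y a b => J y a b / R1 a, ⟨hR1, ?_⟩,
    fun y a => ⟨fun b => div_nonneg (hJ y a b) (hR1 a), ?_⟩, fun x y => ?_⟩
  · simp [R1, sum_add_distrib, ← mul_sum, hQ1.2]
  · rw [← sum_div]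
    exact div_le_one_of_le₀ (hJR y a) (hR1 a)
  · simp only [← sum_tiltWeight, tiltWeight, hfac]
    simp [J, Fintype.sum_prod_type, add_mul, sum_add_distrib, mul_sum, mul_assoc]

end Mixture

section KKT

variable {X Y X1 X2 : Type*} [Fintype X] [Fintype Y] [Fintype X1] [Fintype X2]
  {P : X → Y → ℝ} {W1 : X → Y → X1 → ℝ} {W2 : X → Y → X1 → X2 → ℝ}
  {d1 : X → X1 → ℝ} {d2 : X → X2 → ℝ} {l1 l2 D1 D2 : ℝ}

theorem sum_sum_mul_alpha_mul_exp_le_one (hP : IsPMF2 P) (hd1 : ∀ x a, 0 ≤ d1 x a)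
    (hd2 : ∀ x b, 0 ≤ d2 x b) (hdual : DualOpt P d1 d2 D1 D2 l1 l2)
    (hach : Achieves P d1 d2 D1 D2 W1 W2) (a₀ : X1) (β : Y → X2) :
    ∑ x, ∑ y, P x y * alpha d1 d2 l1 l2 (pA P W1) (pBgYA P W1 W2) x y *
      exp (-(l1 * d1 x a₀)) * exp (-(l2 * d2 x (β y))) ≤ 1 := by
  have hW1 : IsChan1 W1 := hach.1
  have hW2 : IsChan2 W2 := hach.2.1
  set S := tiltNorm d1 d2 l1 l2 (pA P W1) (pBgYA P W1 W2)
  set r : X → Y → ℝ := fun x y => exp (-(l1 * d1 x a₀)) * exp (-(l2 * d2 x (β y)))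
  have hS : ∀ x y, 0 ≤ S x y := tiltNorm_nonneg (isPMF_pA hP hW1).1 (pBgYA_nonneg hP.1 hW1 hW2)
  have hmix : ∀ t ∈ Set.Ioc (0 : ℝ) 1, ∑ z : X × Y, P z.1 z.2 *
      log ((1 - t) * S z.1 z.2 + t * r z.1 z.2) ≤ ∑ z : X × Y, P z.1 z.2 * log (S z.1 z.2) := by
    intro t ht
    obtain ⟨R1, R2, hR1, hR2, hRS⟩ := exists_tiltNorm_eq_mix (d1 := d1) (d2 := d2) (l1 := l1)
      (l2 := l2) (isPMF_pA hP hW1) (isSubChan2_pBgYA hP.1 hW1 hW2) a₀ β ht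
    have hpos : ∀ x y, 0 < tiltNorm d1 d2 l1 l2 R1 R2 x y := fun x y => by
      rw [hRS]
      exact add_pos_of_nonneg_of_pos (mul_nonneg (sub_nonneg.2 ht.2) (hS x y))
        (mul_pos ht.1 (by positivity))
    simpa only [Fintype.sum_prod_type, hRS] using
      sum_log_tiltNorm_le_of_dualOpt hP hd1 hd2 hdual hach hR1 hR2 hpos
  have key := sum_mul_div_le_one_of_sum_mul_log_le (p := fun z : X × Y => P z.1 z.2)
    (by rw [Fintype.sum_prod_type]; exact hP.2)
    (fun z hz => (tiltNorm_pA_pBgYA_pos hP hW1 hW2 ((hP.1 _ _).lt_of_ne' hz)).ne') hmix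
  rw [Fintype.sum_prod_type] at key
  convert key using 3 with x _ y _
  rw [alpha_eq_inv_tiltNorm]
  ring

end KKT

theorem sum_prod_le_one_of_forall_sum_le_one {Y B : Type*} [Fintype Y] [Finite B] {n : ℕ}
    {N : Fin n → Y → B → ℝ} (hN : ∀ i y b, 0 ≤ N i y b)
    (h1 : ∀ i (β : Y → B), ∑ y, N i y (β y) ≤ 1) (c : (Fin n → Y) → Fin n → B) :
    ∑ ys : Fin n → Y, ∏ i, N i (ys i) (c ys i) ≤ 1 := by
  rcases isEmpty_or_nonempty (Fin n → Y) with hY | ⟨⟨ys₀⟩⟩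
  · simp
  have hmax : ∀ i y, ∃ b, ∀ b', N i y b' ≤ N i y b := fun i y =>
    haveI : Nonempty B := ⟨c ys₀ i⟩
    Finite.exists_max (N i y)
  choose β hβ using hmax
  calc ∑ ys : Fin n → Y, ∏ i, N i (ys i) (c ys i)
      ≤ ∑ ys : Fin n → Y, ∏ i, N i (ys i) (β i (ys i)) :=
        sum_le_sum fun ys _ => prod_le_prod (fun i _ => hN _ _ _) fun i _ => hβ _ _ _
    _ = ∏ i, ∑ y, N i y (β i y) := (Fintype.prod_sum fun i y => N i y (β i y)).symm
    _ ≤ 1 := prod_le_one (fun i _ => sum_nonneg fun y _ => hN _ _ _) fun i _ => h1 i (β i)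

theorem sum_sum_prod_code_le {X Y A B : Type*} [Fintype X] [Fintype Y] [Finite B] {n M : ℕ}
    {G : X → Y → A → B → ℝ} (hG : ∀ x y a b, 0 ≤ G x y a b)
    (h1 : ∀ a (β : Y → B), ∑ x, ∑ y, G x y a (β y) ≤ 1)
    (f : (Fin n → X) → (Fin n → Y) → Fin M) (g1 : Fin M → Fin n → A)
    (g2 : Fin M → (Fin n → Y) → Fin n → B) :
    ∑ xs, ∑ ys, ∏ i, G (xs i) (ys i) (g1 (f xs ys) i) (g2 (f xs ys) ys i) ≤ M := by
  set F : Fin M → (Fin n → X) → (Fin n → Y) → ℝ :=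
    fun m xs ys => ∏ i, G (xs i) (ys i) (g1 m i) (g2 m ys i)
  have hF : ∀ m xs ys, 0 ≤ F m xs ys := fun m xs ys => prod_nonneg fun i _ => hG _ _ _ _
  calc ∑ xs, ∑ ys, F (f xs ys) xs ys ≤ ∑ xs, ∑ ys, ∑ m, F m xs ys :=
        sum_le_sum fun xs _ => sum_le_sum fun ys _ =>
          single_le_sum (fun m _ => hF m xs ys) (mem_univ (f xs ys))
    _ = ∑ m, ∑ ys, ∏ i, ∑ x, G x (ys i) (g1 m i) (g2 m ys i) := by
        rw [sum_congr rfl fun xs _ => Finset.sum_comm, Finset.sum_comm]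
        refine sum_congr rfl fun m _ => ?_
        rw [Finset.sum_comm]
        exact sum_congr rfl fun ys _ => (Fintype.prod_sum fun i x => G x (ys i) (g1 m i) _).symm
    _ ≤ ∑ _m : Fin M, (1 : ℝ) := by
        refine sum_le_sum fun m _ => sum_prod_le_one_of_forall_sum_le_one
          (fun i y b => sum_nonneg fun x _ => hG x y _ b) (fun i β => ?_) (g2 m)
        rw [Finset.sum_comm]
        exact h1 _ β
    _ = M := by simp

theorem sum_sum_mul_ite_le_add {α β : Type*} [Fintype α] [Fintype β] {w h : α → β → ℝ}
    {A B : α → β → Prop} [∀ a b, Decidable (A a b)] [∀ a b, Decidable (B a b)] {c M : ℝ}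
    (hw : ∀ a b, 0 ≤ w a b) (hh : ∀ a b, 0 ≤ h a b) (hc : 0 ≤ c) (hM : ∑ a, ∑ b, h a b ≤ M)
    (hAB : ∀ a b, A a b → ¬B a b → w a b ≤ c⁻¹ * h a b) :
    ∑ a, ∑ b, w a b * (if A a b then 1 else 0) ≤
      ∑ a, ∑ b, w a b * (if B a b then 1 else 0) + c⁻¹ * M := by
  have hpt : ∀ a b, w a b * (if A a b then 1 else 0) ≤
      w a b * (if B a b then 1 else 0) + c⁻¹ * h a b := fun a b => by
    have := mul_nonneg (inv_nonneg.2 hc) (hh a b)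
    split_ifs with hA hB hB
    · linarith
    · linarith [hAB a b hA hB]
    · linarith [hw a b]
    · linarith
  calc _ ≤ ∑ a, ∑ b, (w a b * (if B a b then 1 else 0) + c⁻¹ * h a b) :=
        sum_le_sum fun a _ => sum_le_sum fun b _ => hpt a b
    _ ≤ _ := by
        simp only [sum_add_distrib, ← mul_sum]
        gcongr

theorem sum_le_mul_of_inv_mul_le {n : ℕ} {g : Fin n → ℝ} {D : ℝ}
    (h : (n : ℝ)⁻¹ * ∑ i, g i ≤ D) : ∑ i, g i ≤ n * D := by
  rcases n.eq_zero_or_pos with rfl | hn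
  · simp
  rwa [inv_mul_le_iff₀ (by exact_mod_cast hn)] at h

theorem exp_mul_prod_le_prod_of_le_sum_jK {X Y X1 X2 : Type*} [Fintype X1] [Fintype X2]
    {P : X → Y → ℝ} {d1 : X → X1 → ℝ} {d2 : X → X2 → ℝ} {l1 l2 D1 D2 : ℝ} {Q1 : X1 → ℝ}
    {Q2 : Y → X1 → X2 → ℝ} (hP : ∀ x y, 0 ≤ P x y) (hl1 : 0 ≤ l1) (hl2 : 0 ≤ l2)
    (hα : ∀ x y, 0 ≤ alpha d1 d2 l1 l2 Q1 Q2 x y)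
    (hαpos : ∀ x y, 0 < P x y → 0 < alpha d1 d2 l1 l2 Q1 Q2 x y) {n : ℕ} (xs : Fin n → X)
    (ys : Fin n → Y) (as : Fin n → X1) (bs : Fin n → X2)
    (h1 : (n : ℝ)⁻¹ * ∑ i, d1 (xs i) (as i) ≤ D1) (h2 : (n : ℝ)⁻¹ * ∑ i, d2 (xs i) (bs i) ≤ D2)
    {c : ℝ}
    (hc : c ≤ ∑ i, jK d1 d2 l1 l2 D1 D2 Q1 Q2 (xs i) (ys i)) :
    exp c * ∏ i, P (xs i) (ys i) ≤ ∏ i, (P (xs i) (ys i) * alpha d1 d2 l1 l2 Q1 Q2 (xs i) (ys i) *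
      exp (-(l1 * d1 (xs i) (as i))) * exp (-(l2 * d2 (xs i) (bs i)))) := by
  by_cases hpos : ∀ i, 0 < P (xs i) (ys i)
  · have hprod : ∏ i, (P (xs i) (ys i) * alpha d1 d2 l1 l2 Q1 Q2 (xs i) (ys i) *
          exp (-(l1 * d1 (xs i) (as i))) * exp (-(l2 * d2 (xs i) (bs i)))) =
        (∏ i, P (xs i) (ys i)) * exp (∑ i, (log (alpha d1 d2 l1 l2 Q1 Q2 (xs i) (ys i)) +
          -(l1 * d1 (xs i) (as i)) + -(l2 * d2 (xs i) (bs i)))) := by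
      rw [exp_sum, ← prod_mul_distrib]
      refine prod_congr rfl fun i _ => ?_
      rw [exp_add, exp_add, exp_log (hαpos _ _ (hpos i))]
      ring
    rw [hprod, mul_comm]
    refine mul_le_mul_of_nonneg_left (exp_le_exp.2 ?_) (prod_nonneg fun i _ => hP _ _)
    simp only [jK, sum_sub_distrib, sum_const, card_univ, Fintype.card_fin, nsmul_eq_mul] at hc
    simp only [sum_add_distrib, sum_neg_distrib, ← mul_sum]
    nlinarith [mul_le_mul_of_nonneg_left (sum_le_mul_of_inv_mul_le h1) hl1,
      mul_le_mul_of_nonneg_left (sum_le_mul_of_inv_mul_le h2) hl2]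
  · obtain ⟨i, hi⟩ := not_forall.1 hpos
    rw [prod_eq_zero (mem_univ i) (le_antisymm (not_lt.1 hi) (hP _ _)), mul_zero]
    exact prod_nonneg fun i _ => by
      have := hP (xs i) (ys i)
      have := hα (xs i) (ys i)
      positivity

theorem n_shot_converse_general
    {X Y X1 X2 : Type*} [Fintype X] [Fintype Y] [Fintype X1] [Fintype X2]
    (P : X → Y → ℝ) (d1 : X → X1 → ℝ) (d2 : X → X2 → ℝ) (D1 D2 l1 l2 : ℝ)
    (hP : IsPMF2 P)
    (hd1 : ∀ x a, 0 ≤ d1 x a) (hd2 : ∀ x b, 0 ≤ d2 x b)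
    -- `λ₁*, λ₂*` are dual-optimal multipliers
    (hdual : DualOpt P d1 d2 D1 D2 l1 l2)
    -- a fixed pair of test channels achieving `R_K(P_{XY},D₁,D₂)`
    (W1 : X → Y → X1 → ℝ) (W2 : X → Y → X1 → X2 → ℝ)
    (hach : Achieves P d1 d2 D1 D2 W1 W2)
    -- an arbitrary (n,M)-code: encoder `f`, decoders `g1`, `g2`
    (n M : ℕ)
    (f : (Fin n → X) → (Fin n → Y) → Fin M)
    (g1 : Fin M → (Fin n → X1)) (g2 : Fin M → (Fin n → Y) → (Fin n → X2))
    (γ : ℝ) :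
    -- ε_nᴷ(D₁,D₂) ≥ Pr[ Σᵢ j_K(Xᵢ,Yᵢ) ≥ log M + nγ ] − exp(−nγ)
    (∑ xs : Fin n → X, ∑ ys : Fin n → Y, (∏ i, P (xs i) (ys i)) *
        (if D1 < (n : ℝ)⁻¹ * ∑ i, d1 (xs i) (g1 (f xs ys) i)
            ∨ D2 < (n : ℝ)⁻¹ * ∑ i, d2 (xs i) (g2 (f xs ys) ys i) then 1 else 0))
    ≥ (∑ xs : Fin n → X, ∑ ys : Fin n → Y, (∏ i, P (xs i) (ys i)) *
        (if Real.log M + n * γ ≤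
            ∑ i, jK d1 d2 l1 l2 D1 D2 (pA P W1) (pBgYA P W1 W2) (xs i) (ys i)
          then 1 else 0))
      - Real.exp (-(n * γ)) := by
  have hα := alpha_nonneg (d1 := d1) (d2 := d2) (l1 := l1) (l2 := l2) (isPMF_pA hP hach.1).1
    (pBgYA_nonneg hP.1 hach.1 hach.2.1)
  set G : X → Y → X1 → X2 → ℝ := fun x y a b =>
    P x y * alpha d1 d2 l1 l2 (pA P W1) (pBgYA P W1 W2) x y * exp (-(l1 * d1 x a)) *
      exp (-(l2 * d2 x b))
  have hG : ∀ x y a b, 0 ≤ G x y a b := fun x y a b => by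
    have := hP.1 x y
    have := hα x y
    positivity
  have hcode := sum_sum_prod_code_le hG
    (sum_sum_mul_alpha_mul_exp_le_one hP hd1 hd2 hdual hach) f g1 g2
  have hchange : ∀ xs ys,
      log M + n * γ ≤ ∑ i, jK d1 d2 l1 l2 D1 D2 (pA P W1) (pBgYA P W1 W2) (xs i) (ys i) →
      ¬(D1 < (n : ℝ)⁻¹ * ∑ i, d1 (xs i) (g1 (f xs ys) i) ∨
        D2 < (n : ℝ)⁻¹ * ∑ i, d2 (xs i) (g2 (f xs ys) ys i)) →
      ∏ i, P (xs i) (ys i) ≤ ((M : ℝ) * exp (n * γ))⁻¹ *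
        ∏ i, G (xs i) (ys i) (g1 (f xs ys) i) (g2 (f xs ys) ys i) := by
    intro xs ys hj hexc
    rw [not_or, not_lt, not_lt] at hexc
    have hM : (0 : ℝ) < M := by exact_mod_cast (f xs ys).pos
    rw [le_inv_mul_iff₀ (by positivity), ← exp_log hM, ← exp_add]
    exact exp_mul_prod_le_prod_of_le_sum_jK hP.1 hdual.1 hdual.2.1 hα
      (fun _ _ => alpha_pA_pBgYA_pos hP hach.1 hach.2.1) xs ys _ _ hexc.1 hexc.2 hj
  rw [ge_iff_le, sub_le_iff_le_add]
  refine (sum_sum_mul_ite_le_add (fun xs ys => prod_nonneg fun i _ => hP.1 _ _)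
    (fun xs ys => prod_nonneg fun i _ => hG _ _ _ _) (by positivity) hcode hchange).trans ?_
  gcongr
  rw [mul_inv, mul_comm, ← mul_assoc, exp_neg]
  exact mul_le_of_le_one_left (by positivity) (mul_inv_le_one_of_le₀ le_rfl (by positivity))

/-- non-asymptotic converse bound for blocklength-`n` codes
for the Kaspi problem with a memoryless source. -/
theorem n_shot_converse
    {X Y X1 X2 : Type*} [Fintype X] [Fintype Y] [Fintype X1] [Fintype X2]
    (P : X → Y → ℝ) (d1 : X → X1 → ℝ) (d2 : X → X2 → ℝ) (D1 D2 l1 l2 : ℝ)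
    (hP : IsPMF2 P)
    (hd1 : ∀ x a, 0 ≤ d1 x a) (hd2 : ∀ x b, 0 ≤ d2 x b)
    -- `λ₁*, λ₂*` are dual-optimal multipliers
    (hdual : DualOpt P d1 d2 D1 D2 l1 l2)
    -- a fixed pair of test channels achieving `R_K(P_{XY},D₁,D₂)`
    (W1 : X → Y → X1 → ℝ) (W2 : X → Y → X1 → X2 → ℝ)
    (hach : Achieves P d1 d2 D1 D2 W1 W2)
    -- an arbitrary (n,M)-code: encoder `f`, decoders `g1`, `g2`
    (n M : ℕ) (hn : 0 < n) (hM : 0 < M)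
    (f : (Fin n → X) → (Fin n → Y) → Fin M)
    (g1 : Fin M → (Fin n → X1)) (g2 : Fin M → (Fin n → Y) → (Fin n → X2))
    (γ : ℝ) (hγ : 0 ≤ γ) :
    -- ε_nᴷ(D₁,D₂) ≥ Pr[ Σᵢ j_K(Xᵢ,Yᵢ) ≥ log M + nγ ] − exp(−nγ)
    (∑ xs : Fin n → X, ∑ ys : Fin n → Y, (∏ i, P (xs i) (ys i)) *
        (if D1 < (n : ℝ)⁻¹ * ∑ i, d1 (xs i) (g1 (f xs ys) i)
            ∨ D2 < (n : ℝ)⁻¹ * ∑ i, d2 (xs i) (g2 (f xs ys) ys i) then 1 else 0))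
    ≥ (∑ xs : Fin n → X, ∑ ys : Fin n → Y, (∏ i, P (xs i) (ys i)) *
        (if Real.log M + n * γ ≤
            ∑ i, jK d1 d2 l1 l2 D1 D2 (pA P W1) (pBgYA P W1 W2) (xs i) (ys i)
          then 1 else 0))
      - Real.exp (-(n * γ)) :=
  n_shot_converse_general P d1 d2 D1 D2 l1 l2 hP hd1 hd2 hdual W1 W2 hach n M f g1 g2 γ

end Kaspi
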